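/- arXiv:2505.11183 — 6 statements merged into one kernel-verified Lean document; each statement's English description precedes it below -/
import Mathlib

section
/- Let V be a finite set with |V| ≥ 2 and L ≥ 1, and identify the non-root nodes of the complete |V|-ary tree of depth L with nonempty strings over V of length at most L, i.e. with ⋃_{j=1}^{L} V^j. If S ⊆ ⋃_{j=1}^{L} V^j has cardinality |S| < |V|^L − 1, then there exist j ∈ {1, …, L}, a string w ∈ V^{j−1}, and two distinct tokens u, v ∈ V such that neither w·u nor w·v belongs to S. -/
open Finset

private lemma geo_sum (c : ℕ) (hc : 1 ≤ c) :
    ∀ L : ℕ, (c - 1) * ∑ j ∈ Finset.range L, c ^ j = c ^ L - 1 := by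
  intro L
  induction L with
  | zero => simp
  | succ L ih =>
    rw [Finset.sum_range_succ, Nat.mul_add, ih, Nat.sub_one_mul, pow_succ]
    have h1 : 1 ≤ c ^ L := Nat.one_le_pow _ _ hc
    have h2 : c ^ L ≤ c ^ L * c := Nat.le_mul_of_pos_right _ hc
    have h3 : c * c ^ L = c ^ L * c := Nat.mul_comm _ _
    omega

/-- Finset of lists of fixed length. -/
private def listsOfLen (V : Type*) [Fintype V] [DecidableEq V] (j : ℕ) : Finset (List V) :=
  Finset.univ.image (List.Vector.toList : List.Vector V j → List V)

private lemma card_listsOfLen (V : Type*) [Fintype V] [DecidableEq V] (j : ℕ) :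
    (listsOfLen V j).card = Fintype.card V ^ j := by
  rw [listsOfLen, Finset.card_image_of_injective _ List.Vector.toList_injective,
    Finset.card_univ, card_vector]

private lemma mem_listsOfLen {V : Type*} [Fintype V] [DecidableEq V] {j : ℕ} (l : List V) :
    l ∈ listsOfLen V j ↔ l.length = j := by
  constructor
  · rintro hl
    simp only [listsOfLen, Finset.mem_image] at hl
    obtain ⟨v, -, rfl⟩ := hl
    exact v.toList_length
  · intro hl
    simp only [listsOfLen, Finset.mem_image]
    exact ⟨⟨l, hl⟩, Finset.mem_univ _, rfl⟩

/- STATEMENT 2: if S is a set of nonempty strings over V of length at most L with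
|S| < |V|^L - 1, then there is a string w of length < L and two distinct tokens u ≠ v
such that neither w·u nor w·v belongs to S (two unqueried sibling nodes). -/
theorem stmt2 {V : Type*} [Fintype V] [DecidableEq V] (hV : 2 ≤ Fintype.card V)
    {L : ℕ} (hL : 1 ≤ L) (S : Finset (List V))
    (hS : ∀ s ∈ S, 1 ≤ s.length ∧ s.length ≤ L)
    (hcard : S.card < Fintype.card V ^ L - 1) :
    ∃ (w : List V) (u v : V), w.length < L ∧ u ≠ v ∧
      (w ++ [u]) ∉ S ∧ (w ++ [v]) ∉ S := by
  by_contra hcon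
  push_neg at hcon
  -- Parents: all lists of length < L
  set P : Finset (List V) := (Finset.range L).biUnion (listsOfLen V) with hP
  have hPmem : ∀ w : List V, w ∈ P ↔ w.length < L := by
    intro w
    simp [hP, Finset.mem_biUnion, mem_listsOfLen]
  -- children in S
  set C : List V → Finset V := fun w => Finset.univ.filter (fun u => (w ++ [u]) ∈ S) with hC
  have hCcard : ∀ w : List V, w.length < L → Fintype.card V - 1 ≤ (C w).card := by
    intro w hw
    have hone : (Finset.univ.filter (fun u => (w ++ [u]) ∉ S)).card ≤ 1 := by
      apply Finset.card_le_one.2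
      intro u hu v hv
      simp only [Finset.mem_filter] at hu hv
      by_contra huv
      exact hv.2 (hcon w u v hw huv hu.2)
    have := Finset.card_filter_add_card_filter_not
      (s := (Finset.univ : Finset V)) (p := fun u => (w ++ [u]) ∈ S)
    rw [Finset.card_univ] at this
    simp only [hC]
    omega
  -- the tree of queried children
  set T : Finset (List V) := P.biUnion (fun w => (C w).image (fun u => w ++ [u])) with hT
  have hTS : T ⊆ S := by
    intro x hx
    simp only [hT, Finset.mem_biUnion, Finset.mem_image] at hx
    obtain ⟨w, -, u, hu, rfl⟩ := hx
    simpa [hC] using hu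
  have key : ∀ {w w' : List V} {u u' : V}, w ++ [u] = w' ++ [u'] → w = w' ∧ u = u' := by
    intro w w' u u' h
    have hlen : w.length = w'.length := by
      have := congrArg List.length h
      simp only [List.length_append, List.length_singleton] at this
      omega
    have := List.append_inj h hlen
    simpa using this
  have hTcard : T.card = ∑ w ∈ P, (C w).card := by
    rw [hT, Finset.card_biUnion]
    · refine Finset.sum_congr rfl fun w _ => ?_
      exact Finset.card_image_of_injective _ (fun u u' h => (key h).2)
    · intro w hw w' hw' hww
      apply Finset.disjoint_left.2
      intro x hx hx'
      simp only [Finset.mem_image] at hx hx'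
      obtain ⟨u, -, rfl⟩ := hx
      obtain ⟨u', -, h⟩ := hx'
      exact hww (key h).1.symm
  have hPcard : P.card = ∑ j ∈ Finset.range L, Fintype.card V ^ j := by
    rw [hP, Finset.card_biUnion]
    · exact Finset.sum_congr rfl fun j _ => card_listsOfLen V j
    · intro j hj j' hj' hjj
      apply Finset.disjoint_left.2
      intro x hx hx'
      rw [mem_listsOfLen] at hx hx'
      omega
  have hsum : P.card * (Fintype.card V - 1) ≤ ∑ w ∈ P, (C w).card := by
    calc P.card * (Fintype.card V - 1) = ∑ _w ∈ P, (Fintype.card V - 1) := by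
          rw [Finset.sum_const, smul_eq_mul]
      _ ≤ ∑ w ∈ P, (C w).card :=
          Finset.sum_le_sum fun w hw => hCcard w ((hPmem w).1 hw)
  have hgeo : (Fintype.card V - 1) * ∑ j ∈ Finset.range L, Fintype.card V ^ j
      = Fintype.card V ^ L - 1 := geo_sum _ (by omega) L
  have : Fintype.card V ^ L - 1 ≤ S.card := by
    calc Fintype.card V ^ L - 1
        = (Fintype.card V - 1) * ∑ j ∈ Finset.range L, Fintype.card V ^ j := hgeo.symm
      _ = P.card * (Fintype.card V - 1) := by rw [hPcard, Nat.mul_comm]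
      _ ≤ ∑ w ∈ P, (C w).card := hsum
      _ = T.card := hTcard.symm
      _ ≤ S.card := Finset.card_le_card hTS
  omega
end

section
/- Let V be a finite set with |V| ≥ 2, let L ≥ 1, and let S ⊆ ⋃_{j=1}^{L} V^j with |S| < |V|^L − 1. Then there exist two probability distributions p and p′ on Y = V^L such that: (i) for every string w·u ∈ S (with w ∈ V^{j−1}, u ∈ V), both p and p′ assign conditional next-token probability p(u|w) = p′(u|w) = 1/|V|; and (ii) the set of sequences of maximum p-probability is disjoint from the set of sequences of maximum p′-probability. Hence an algorithm that queries only the conditional probabilities indexed by S cannot output a maximum-probability sequence (the optimal output for the L-gram Hamming, i.e. 0-1, loss) under both p and p′. -/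
/- prefixProb p w = P_{z∼p}(w is a prefix of z), for a distribution p on Y = V^L. -/
open Classical in
noncomputable def prefixProb {V : Type*} [Fintype V] {L : ℕ}
    (p : (Fin L → V) → ℝ) (w : List V) : ℝ :=
  ∑ y : Fin L → V, if w <+: List.ofFn y then p y else 0

/- condProb p w t = p(t | w) = P(w·t prefix) / P(w prefix). -/
noncomputable def condProb {V : Type*} [Fintype V] {L : ℕ}
    (p : (Fin L → V) → ℝ) (w t : List V) : ℝ :=
  prefixProb p (w ++ t) / prefixProb p w

/-
The constraints p(u | w) = 1/|V| for w·u ∈ S, written as P(w·u) = P(w)/|V|, are linear in p;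
together with the total mass they are |S| + 1 < |V|^L linear conditions, so some d ≠ 0 with
∑ d = 0 satisfies their homogeneous versions. The uniform distribution satisfies the constraints,
hence so do uniform ± t·d, which are positive for small t > 0. A mode of uniform + t·d maximizes d
and a mode of uniform − t·d minimizes d; as d ≠ 0 has mean zero, max d > 0 > min d.
-/

open Finset

lemma exists_ne_zero_forall_apply_eq_zero {K M ι : Type*} [Field K] [AddCommGroup M]
    [Module K M] [FiniteDimensional K M] [Fintype ι] (ℓ : ι → M →ₗ[K] K)
    (h : Fintype.card ι < Module.finrank K M) : ∃ d ≠ 0, ∀ i, ℓ i d = 0 := by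
  obtain ⟨d, hd, hd0⟩ := Submodule.exists_mem_ne_zero_of_ne_bot
    (LinearMap.ker_ne_bot_of_finrank_lt (f := LinearMap.pi ℓ) (by simpa using h))
  exact ⟨d, hd0, fun i => congrFun (LinearMap.mem_ker.mp hd) i⟩

lemma exists_pos_forall_mul_abs_lt {α : Type*} [Fintype α] (d : α → ℝ) {c : ℝ} (hc : 0 < c) :
    ∃ t > 0, ∀ y, t * |d y| < c := by
  refine ⟨c / (1 + ∑ y, |d y|), by positivity, fun y => ?_⟩
  have hy : |d y| ≤ ∑ z, |d z| := single_le_sum (fun z _ => abs_nonneg (d z)) (mem_univ y)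
  rw [div_mul_eq_mul_div, div_lt_iff₀ (by positivity)]
  nlinarith

lemma ne_of_forall_le_of_forall_ge {α : Type*} [Fintype α] {d : α → ℝ} (hd : d ≠ 0)
    (hsum : ∑ x, d x = 0) {y y' : α} (hy : ∀ z, d z ≤ d y) (hy' : ∀ z, d y' ≤ d z) : y ≠ y' := by
  obtain ⟨z, -, hz⟩ : ∃ z ∈ univ, d z ≠ 0 := by simpa [funext_iff] using hd
  obtain ⟨zp, -, hzp⟩ := exists_pos_of_sum_zero_of_exists_nonzero d hsum ⟨z, mem_univ z, hz⟩
  obtain ⟨zm, -, hzm⟩ := exists_pos_of_sum_zero_of_exists_nonzero (-d) (by simp [hsum])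
    ⟨z, mem_univ z, by simpa using hz⟩
  rintro rfl
  linarith [hy zp, hy' zm, Pi.neg_apply d zm]

section Prefix

variable {V : Type*} [Fintype V] {L : ℕ}

def cylinder (w : List V) : Finset (Fin L → V) :=
  Fintype.piFinset fun i => if h : (i : ℕ) < w.length then {w[i]} else univ

lemma mem_cylinder {w : List V} (hw : w.length ≤ L) {y : Fin L → V} :
    y ∈ cylinder w ↔ w <+: List.ofFn y := by
  simp only [cylinder, Fintype.mem_piFinset, List.prefix_iff_getElem, List.length_ofFn, hw,
    exists_true_left, List.getElem_ofFn]
  refine ⟨fun h i hi => ?_, fun h i => ?_⟩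
  · simpa [hi, eq_comm] using h ⟨i, by omega⟩
  · split_ifs with hi
    · simp [h i hi]
    · exact mem_univ _

lemma card_cylinder {w : List V} (hw : w.length ≤ L) :
    #(cylinder (L := L) w) = Fintype.card V ^ (L - w.length) := by
  simp only [cylinder, Fintype.card_piFinset, apply_dite card, card_singleton, card_univ]
  have hcard : #{i : Fin L | ¬ (i : ℕ) < w.length} = L - w.length := by
    have := card_filter_add_card_filter_not (s := univ) fun i : Fin L => (i : ℕ) < w.length
    rw [Fin.card_filter_val_lt, card_univ, Fintype.card_fin] at this
    omega
  simp only [dite_eq_ite, prod_ite, prod_const_one, prod_const, one_mul, hcard]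

lemma prefixProb_nil (p : (Fin L → V) → ℝ) : prefixProb p [] = ∑ y, p y := by
  simp [prefixProb]

lemma prefixProb_eq_sum_cylinder (p : (Fin L → V) → ℝ) {w : List V} (hw : w.length ≤ L) :
    prefixProb p w = ∑ y ∈ cylinder w, p y := by
  rw [prefixProb, ← sum_filter]
  congr 1
  ext y
  simp [mem_cylinder hw]

lemma prefixProb_const (c : ℝ) {w : List V} (hw : w.length ≤ L) :
    prefixProb (fun _ : Fin L → V => c) w = (Fintype.card V : ℝ) ^ (L - w.length) * c := by
  rw [prefixProb_eq_sum_cylinder _ hw, sum_const, card_cylinder hw, nsmul_eq_mul, Nat.cast_pow]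

lemma prefixProb_pos [Nonempty V] {p : (Fin L → V) → ℝ} (hp : ∀ y, 0 < p y) {w : List V}
    (hw : w.length ≤ L) : 0 < prefixProb p w := by
  rw [prefixProb_eq_sum_cylinder _ hw]
  refine sum_pos (fun y _ => hp y) ?_
  rw [← card_pos, card_cylinder hw]
  exact pow_pos Fintype.card_pos _

lemma prefixProb_const_append_singleton [Nonempty V] (c : ℝ) {w : List V} (u : V)
    (hw : w.length + 1 ≤ L) :
    prefixProb (fun _ : Fin L → V => c) (w ++ [u])
      = (Fintype.card V : ℝ)⁻¹ * prefixProb (fun _ : Fin L → V => c) w := by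
  have hV : (Fintype.card V : ℝ) ≠ 0 := Nat.cast_ne_zero.mpr Fintype.card_ne_zero
  rw [prefixProb_const c (by simpa using hw), prefixProb_const c (by omega),
    List.length_append, List.length_singleton, show L - w.length = L - (w.length + 1) + 1 by omega,
    pow_succ]
  field_simp

lemma condProb_eq_of_prefixProb_append {p : (Fin L → V) → ℝ} {w t : List V} {c : ℝ}
    (hw : prefixProb p w ≠ 0) (h : prefixProb p (w ++ t) = c * prefixProb p w) :
    condProb p w t = c := by
  rw [condProb, h, mul_div_cancel_right₀ _ hw]

noncomputable def prefixProbₗ (w : List V) : ((Fin L → V) → ℝ) →ₗ[ℝ] ℝ where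
  toFun p := prefixProb p w
  map_add' p q := by simp only [prefixProb, Pi.add_apply, ← sum_add_distrib, ite_add_ite, add_zero]
  map_smul' c p := by
    simp only [prefixProb, Pi.smul_apply, smul_eq_mul, mul_sum, mul_ite, mul_zero, RingHom.id_apply]

@[simp]
lemma prefixProbₗ_apply (w : List V) (p : (Fin L → V) → ℝ) : prefixProbₗ w p = prefixProb p w :=
  rfl

/- `p(u | w) = 1/|V|` with the division cleared, which makes it linear in `p`. -/
def HasUniformConditionals (S : Finset (List V)) (p : (Fin L → V) → ℝ) : Prop :=
  ∀ w u, w ++ [u] ∈ S → prefixProb p (w ++ [u]) = (Fintype.card V : ℝ)⁻¹ * prefixProb p w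

lemma HasUniformConditionals.condProb_eq {S : Finset (List V)} {p : (Fin L → V) → ℝ}
    (hp : HasUniformConditionals S p) {w : List V} {u : V} (hwu : w ++ [u] ∈ S)
    (hw : 0 < prefixProb p w) : condProb p w [u] = 1 / (Fintype.card V : ℝ) := by
  rw [one_div]
  exact condProb_eq_of_prefixProb_append hw.ne' (hp w u hwu)

lemma HasUniformConditionals.add_mul {S : Finset (List V)} {p d : (Fin L → V) → ℝ}
    (hp : HasUniformConditionals S p) (hd : HasUniformConditionals S d) (r : ℝ) :
    HasUniformConditionals S fun y => p y + r * d y := by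
  intro w u hwu
  have hlin (x : List V) : prefixProb (fun y => p y + r * d y) x
      = prefixProb p x + r * prefixProb d x := by
    show prefixProbₗ x (p + r • d) = _
    rw [map_add, map_smul]
    rfl
  rw [hlin, hlin, hp w u hwu, hd w u hwu]
  ring

lemma hasUniformConditionals_const [Nonempty V] {S : Finset (List V)}
    (hS : ∀ s ∈ S, s.length ≤ L) (c : ℝ) : HasUniformConditionals S fun _ : Fin L → V => c :=
  fun w u hwu => prefixProb_const_append_singleton c u (by simpa using hS _ hwu)

lemma exists_ne_zero_sum_eq_zero_hasUniformConditionals (S : Finset (List V))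
    (hS : S.card + 1 < Fintype.card V ^ L) :
    ∃ d : (Fin L → V) → ℝ, d ≠ 0 ∧ ∑ y, d y = 0 ∧ HasUniformConditionals S d := by
  obtain ⟨d, hd0, hd⟩ := exists_ne_zero_forall_apply_eq_zero
    (fun i : Option S => i.elim (prefixProbₗ [])
      fun s => prefixProbₗ s - (Fintype.card V : ℝ)⁻¹ • prefixProbₗ (s : List V).dropLast)
    (by simpa [Module.finrank_fintype_fun_eq_card] using hS)
  refine ⟨d, hd0, by simpa [prefixProb_nil] using hd none, fun w u hwu => ?_⟩
  have := hd (some ⟨_, hwu⟩)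
  simp only [Option.elim_some, LinearMap.sub_apply, LinearMap.smul_apply, prefixProbₗ_apply,
    List.dropLast_concat, smul_eq_mul] at this
  linarith

noncomputable def perturbUniform (r : ℝ) (d : (Fin L → V) → ℝ) : (Fin L → V) → ℝ :=
  fun y => ((Fintype.card V : ℝ) ^ L)⁻¹ + r * d y

lemma perturbUniform_pos {r : ℝ} {d : (Fin L → V) → ℝ}
    (hr : ∀ y, |r| * |d y| < ((Fintype.card V : ℝ) ^ L)⁻¹) (y : Fin L → V) :
    0 < perturbUniform r d y := by
  have := hr y
  rw [← abs_mul] at this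
  have := neg_abs_le (r * d y)
  rw [perturbUniform]
  linarith

lemma hasUniformConditionals_perturbUniform [Nonempty V] {S : Finset (List V)}
    (hS : ∀ s ∈ S, s.length ≤ L) {d : (Fin L → V) → ℝ} (hd : HasUniformConditionals S d)
    (r : ℝ) : HasUniformConditionals S (perturbUniform r d) :=
  (hasUniformConditionals_const hS _).add_mul hd r

lemma sum_perturbUniform [Nonempty V] (r : ℝ) {d : (Fin L → V) → ℝ} (hd : ∑ y, d y = 0) :
    ∑ y, perturbUniform r d y = 1 := by
  simp [perturbUniform, sum_add_distrib, ← mul_sum, hd]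

end Prefix

theorem stmt3_general {V : Type*} [Fintype V]
    {L : ℕ} (S : Finset (List V))
    (hS : ∀ s ∈ S, 1 ≤ s.length ∧ s.length ≤ L)
    (hcard : S.card < Fintype.card V ^ L - 1) :
    ∃ p p' : (Fin L → V) → ℝ,
      (∀ y, 0 ≤ p y) ∧ (∑ y, p y = 1) ∧
      (∀ y, 0 ≤ p' y) ∧ (∑ y, p' y = 1) ∧
      (∀ (w : List V) (u : V), (w ++ [u]) ∈ S →
        0 < prefixProb p w ∧ 0 < prefixProb p' w ∧
        condProb p w [u] = 1 / (Fintype.card V : ℝ) ∧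
        condProb p' w [u] = 1 / (Fintype.card V : ℝ)) ∧
      (∀ y y' : Fin L → V,
        (∀ z, p z ≤ p y) → (∀ z, p' z ≤ p' y') → y ≠ y') := by
  have hSL : ∀ s ∈ S, s.length ≤ L := fun s hs => (hS s hs).2
  have hlt : S.card + 1 < Fintype.card V ^ L := by omega
  have : Nonempty V := by
    refine Fintype.card_pos_iff.mp (Nat.pos_of_ne_zero fun h0 => ?_)
    have := pow_le_one₀ (n := L) (le_refl (0 : ℕ)) zero_le_one
    rw [h0] at hlt
    omega
  obtain ⟨d, hd0, hsum, hd⟩ := exists_ne_zero_sum_eq_zero_hasUniformConditionals S hlt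
  obtain ⟨t, ht, hdt⟩ := exists_pos_forall_mul_abs_lt d (c := ((Fintype.card V : ℝ) ^ L)⁻¹)
    (by positivity)
  have hpos (r : ℝ) (hr : |r| = t) (y) : 0 < perturbUniform r d y :=
    perturbUniform_pos (by simpa [hr] using hdt) y
  refine ⟨perturbUniform t d, perturbUniform (-t) d, fun y => (hpos t (abs_of_pos ht) y).le,
    sum_perturbUniform t hsum, fun y => (hpos (-t) (by simp [abs_of_pos ht]) y).le,
    sum_perturbUniform (-t) hsum, fun w u hwu => ?_, fun y y' hy hy' => ?_⟩
  · have hw : w.length ≤ L := by simpa using (hSL _ hwu).trans' (by simp)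
    have hp := prefixProb_pos (hpos t (abs_of_pos ht)) hw
    have hp' := prefixProb_pos (hpos (-t) (by simp [abs_of_pos ht])) hw
    exact ⟨hp, hp', (hasUniformConditionals_perturbUniform hSL hd t).condProb_eq hwu hp,
      (hasUniformConditionals_perturbUniform hSL hd (-t)).condProb_eq hwu hp'⟩
  · refine ne_of_forall_le_of_forall_ge hd0 hsum (fun z => ?_) (fun z => ?_)
    · simpa only [perturbUniform, add_le_add_iff_left, mul_le_mul_iff_right₀ ht] using hy z
    · simpa only [perturbUniform, add_le_add_iff_left, neg_mul, neg_le_neg_iff,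
        mul_le_mul_iff_right₀ ht] using hy' z

theorem stmt3 {V : Type*} [Fintype V] [DecidableEq V] (hV : 2 ≤ Fintype.card V)
    {L : ℕ} (hL : 1 ≤ L) (S : Finset (List V))
    (hS : ∀ s ∈ S, 1 ≤ s.length ∧ s.length ≤ L)
    (hcard : S.card < Fintype.card V ^ L - 1) :
    ∃ p p' : (Fin L → V) → ℝ,
      (∀ y, 0 ≤ p y) ∧ (∑ y, p y = 1) ∧
      (∀ y, 0 ≤ p' y) ∧ (∑ y, p' y = 1) ∧
      (∀ (w : List V) (u : V), (w ++ [u]) ∈ S →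
        0 < prefixProb p w ∧ 0 < prefixProb p' w ∧
        condProb p w [u] = 1 / (Fintype.card V : ℝ) ∧
        condProb p' w [u] = 1 / (Fintype.card V : ℝ)) ∧
      (∀ y y' : Fin L → V,
        (∀ z, p z ≤ p y) → (∀ z, p' z ≤ p' y') → y ≠ y') :=
  stmt3_general S hS hcard
end

section
/- Fix 1 ≤ T ≤ K ≤ L. Let p* be a probability distribution on Y = V^L that is tie-free for (K,T), and suppose every prefix visited by the K_T-lookahead decoder run on p* has positive p*-probability. Let (p^i) be probability distributions on Y such that for every prefix w with positive p*-probability and every tuple (v_1,…,v_c) with 1 ≤ c ≤ K, we have p^i(w) > 0 for all sufficiently large i and p^i(v_1⋯v_c | w) → p*(v_1⋯v_c | w) as i → ∞. Then there exists I such that for all i > I the K_T-lookahead decoder is well-defined on p^i (all argmaxes along its path are unique) and D_{K,T}(p^i) = D_{K,T}(p*). In particular, for every y ∈ Y the probability that the decoder run on p^i outputs y converges to the probability that it outputs y when run on p*. -/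
/- One iteration of the K_T-lookahead decoder: from prefix w of length m < L, with
c = min(K, L-m), pick a maximizer t of p(t|w) over tuples of length c and append its
first min(T, L-m) tokens. -/
def LookStep {V : Type*} [Fintype V] {L : ℕ} (K T : ℕ)
    (p : (Fin L → V) → ℝ) (w w' : List V) : Prop :=
  w.length < L ∧ ∃ t : List V, t.length = min K (L - w.length) ∧
    (∀ t' : List V, t'.length = min K (L - w.length) → condProb p w t' ≤ condProb p w t) ∧
    w' = w ++ t.take (min T (L - w.length))

/- A prefix is reachable if the decoder can visit it starting from the empty prefix. -/
def Reachable {V : Type*} [Fintype V] {L : ℕ} (K T : ℕ)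
    (p : (Fin L → V) → ℝ) (w : List V) : Prop :=
  Relation.ReflTransGen (LookStep (L := L) K T p) [] w

/- y ∈ V^L is an output of the K_T-lookahead decoder run on p. -/
def IsLookahead {V : Type*} [Fintype V] {L : ℕ} (K T : ℕ)
    (p : (Fin L → V) → ℝ) (y : Fin L → V) : Prop :=
  Reachable K T p (List.ofFn y)

/- p is tie-free for (K,T): every argmax along the decoder's path is unique. -/
def TieFree {V : Type*} [Fintype V] {L : ℕ} (K T : ℕ)
    (p : (Fin L → V) → ℝ) : Prop :=
  ∀ w : List V, Reachable K T p w → w.length < L →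
    ∃! t : List V, t.length = min K (L - w.length) ∧
      ∀ t' : List V, t'.length = min K (L - w.length) → condProb p w t' ≤ condProb p w t

/- STATEMENT 4: if p* ∈ 𝒫 is tie-free for (K,T), every decoder-visited prefix has positive
p*-probability, and the conditional probabilities of p^i converge to those of p* (with
eventually positive prefixes), then eventually the decoder is well-defined on p^i and outputs
exactly the same sequence as on p*; in particular the output probability of every y ∈ Y
converges. -/
open Classical in
theorem stmt4 {V : Type*} [Fintype V] [Nonempty V] {L K T : ℕ}
    (hT1 : 1 ≤ T) (hTK : T ≤ K) (hKL : K ≤ L)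
    (pstar : (Fin L → V) → ℝ) (hps0 : ∀ y, 0 ≤ pstar y) (hps1 : ∑ y, pstar y = 1)
    (htf : TieFree K T pstar)
    (hpos : ∀ w : List V, Reachable K T pstar w → 0 < prefixProb pstar w)
    (p : ℕ → (Fin L → V) → ℝ)
    (hp0 : ∀ i y, 0 ≤ p i y) (hp1 : ∀ i, ∑ y, p i y = 1)
    (hconv : ∀ w : List V, 0 < prefixProb pstar w →
      ∀ t : List V, 1 ≤ t.length → t.length ≤ K → w.length + t.length ≤ L →
        (∀ᶠ i in Filter.atTop, 0 < prefixProb (p i) w) ∧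
        Filter.Tendsto (fun i => condProb (p i) w t) Filter.atTop
          (nhds (condProb pstar w t))) :
    (∃ I : ℕ, ∀ i > I, TieFree K T (p i) ∧
      ∀ y : Fin L → V, (IsLookahead K T (p i) y ↔ IsLookahead K T pstar y)) ∧
    (∀ y : Fin L → V,
      Filter.Tendsto (fun i => if IsLookahead K T (p i) y then (1 : ℝ) else 0)
        Filter.atTop (nhds (if IsLookahead K T pstar y then (1 : ℝ) else 0))) := by
  classical
  have hK1 : 1 ≤ K := le_trans hT1 hTK
  -- strict version of tie-freeness, with a total choice function
  have htf'' : ∀ w : List V, ∃ t : List V,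
      Reachable K T pstar w → w.length < L →
      (t.length = min K (L - w.length) ∧
        ∀ t' : List V, t'.length = min K (L - w.length) →
          condProb pstar w t' ≤ condProb pstar w t) ∧
      (∀ t' : List V, t'.length = min K (L - w.length) → t' ≠ t →
          condProb pstar w t' < condProb pstar w t) := by
    intro w
    by_cases h : Reachable K T pstar w ∧ w.length < L
    · obtain ⟨t, ht, huniq⟩ := htf w h.1 h.2
      refine ⟨t, fun _ _ => ⟨ht, ?_⟩⟩
      intro t' hlen hne
      rcases lt_or_eq_of_le (ht.2 t' hlen) with hlt | heq
      · exact hlt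
      · exact absurd (huniq t' ⟨hlen, fun t'' h'' => heq ▸ ht.2 t'' h''⟩) hne
    · exact ⟨[], fun h1 h2 => absurd ⟨h1, h2⟩ h⟩
  choose tstar hts using htf''
  -- reachable prefixes have length ≤ L
  have hlenle : ∀ q : (Fin L → V) → ℝ, ∀ w : List V, Reachable K T q w → w.length ≤ L := by
    intro q w h
    induction h with
    | refl => simp
    | tail _ hstep ih =>
      obtain ⟨hlt, t, ht, _, rfl⟩ := hstep
      simp only [List.length_append, List.length_take, ht]
      omega
  -- eventual goodness at each reachable prefix
  have hgood : ∀ w : List V, Reachable K T pstar w → w.length < L →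
      ∀ᶠ i in Filter.atTop, 0 < prefixProb (p i) w ∧
        ∀ t' : List V, t'.length = min K (L - w.length) → t' ≠ tstar w →
          condProb (p i) w t' < condProb (p i) w (tstar w) := by
    intro w hr hl
    have hpw := hpos w hr
    obtain ⟨⟨hlen, hmax⟩, hstrict⟩ := hts w hr hl
    have hconv_t : ∀ t' : List V, t'.length = min K (L - w.length) →
        Filter.Tendsto (fun i => condProb (p i) w t') Filter.atTop
          (nhds (condProb pstar w t')) := by
      intro t' h
      exact (hconv w hpw t' (by omega) (by omega) (by omega)).2
    have hposEv := (hconv w hpw (tstar w) (by omega) (by omega) (by omega)).1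
    have hall : ∀ᶠ i in Filter.atTop, ∀ t' ∈ {t : List V | t.length ≤ K},
        t'.length = min K (L - w.length) → t' ≠ tstar w →
          condProb (p i) w t' < condProb (p i) w (tstar w) := by
      rw [Filter.eventually_all_finite (List.finite_length_le V K)]
      intro t' _
      by_cases hc : t'.length = min K (L - w.length) ∧ t' ≠ tstar w
      · filter_upwards [(hconv_t t' hc.1).eventually_lt (hconv_t (tstar w) hlen)
          (hstrict t' hc.1 hc.2)] with i hi _ _
        exact hi
      · filter_upwards with i h1 h2
        exact absurd ⟨h1, h2⟩ hc
    filter_upwards [hposEv, hall] with i h1 h2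
    refine ⟨h1, fun t' ht' hne => h2 t' (by simpa using le_trans (le_of_eq ht') (min_le_left _ _)) ht' hne⟩
  -- combine over all (finitely many) prefixes
  have hbig : ∀ᶠ i in Filter.atTop, ∀ w ∈ {w : List V | w.length ≤ L},
      Reachable K T pstar w → w.length < L →
      0 < prefixProb (p i) w ∧
        ∀ t' : List V, t'.length = min K (L - w.length) → t' ≠ tstar w →
          condProb (p i) w t' < condProb (p i) w (tstar w) := by
    rw [Filter.eventually_all_finite (List.finite_length_le V L)]
    intro w _
    by_cases h : Reachable K T pstar w ∧ w.length < L
    · filter_upwards [hgood w h.1 h.2] with i hi _ _; exact hi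
    · filter_upwards with i h1 h2; exact absurd ⟨h1, h2⟩ h
  obtain ⟨I, hI⟩ := Filter.eventually_atTop.1 hbig
  -- main claim for a fixed good index i
  have hmain : ∀ i > I, TieFree K T (p i) ∧
      ∀ y : Fin L → V, (IsLookahead K T (p i) y ↔ IsLookahead K T pstar y) := by
    intro i hi
    have hGi : ∀ w : List V, Reachable K T pstar w → w.length < L →
        0 < prefixProb (p i) w ∧
          ∀ t' : List V, t'.length = min K (L - w.length) → t' ≠ tstar w →
            condProb (p i) w t' < condProb (p i) w (tstar w) := by
      intro w hr hl
      exact hI i (le_of_lt hi) w (le_of_lt hl) hr hl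
    -- step characterizations
    have hstep_star : ∀ w w' : List V, Reachable K T pstar w → w.length < L →
        (LookStep K T pstar w w' ↔ w' = w ++ (tstar w).take (min T (L - w.length))) := by
      intro w w' hr hl
      obtain ⟨⟨hlen, hmax⟩, hstrict⟩ := hts w hr hl
      constructor
      · rintro ⟨_, t, htlen, htmax, rfl⟩
        by_cases hne : t = tstar w
        · rw [hne]
        · exact absurd (lt_of_lt_of_le (hstrict t htlen hne) (htmax (tstar w) hlen)) (lt_irrefl _)
      · rintro rfl
        exact ⟨hl, tstar w, hlen, hmax, rfl⟩
    have hstep_i : ∀ w w' : List V, Reachable K T pstar w → w.length < L →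
        (LookStep K T (p i) w w' ↔ w' = w ++ (tstar w).take (min T (L - w.length))) := by
      intro w w' hr hl
      obtain ⟨_, hstrict⟩ := hGi w hr hl
      obtain ⟨⟨hlen, _⟩, _⟩ := hts w hr hl
      constructor
      · rintro ⟨_, t, htlen, htmax, rfl⟩
        by_cases hne : t = tstar w
        · rw [hne]
        · exact absurd (lt_of_lt_of_le (hstrict t htlen hne) (htmax (tstar w) hlen)) (lt_irrefl _)
      · rintro rfl
        refine ⟨hl, tstar w, hlen, ?_, rfl⟩
        intro t' ht'
        by_cases hne : t' = tstar w
        · rw [hne]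
        · exact le_of_lt (hstrict t' ht' hne)
    -- reachability coincides
    have hreach : ∀ w : List V, Reachable K T (p i) w ↔ Reachable K T pstar w := by
      intro w
      constructor
      · intro h
        induction h with
        | refl => exact Relation.ReflTransGen.refl
        | tail _ hstep ih =>
          have hl := hstep.1
          exact ih.tail ((hstep_star _ _ ih hl).2 ((hstep_i _ _ ih hl).1 hstep))
      · intro h
        induction h with
        | refl => exact Relation.ReflTransGen.refl
        | @tail b c hb hstep ih =>
          have hl := hstep.1
          have hbstar : Reachable K T pstar b := hb
          exact ih.tail ((hstep_i _ _ hbstar hl).2 ((hstep_star _ _ hbstar hl).1 hstep))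
    constructor
    · -- TieFree (p i)
      intro w hr hl
      have hrstar : Reachable K T pstar w := (hreach w).1 hr
      obtain ⟨_, hstrict⟩ := hGi w hrstar hl
      obtain ⟨⟨hlen, _⟩, _⟩ := hts w hrstar hl
      refine ⟨tstar w, ⟨hlen, ?_⟩, ?_⟩
      · intro t' ht'
        by_cases hne : t' = tstar w
        · rw [hne]
        · exact le_of_lt (hstrict t' ht' hne)
      · rintro t ⟨htlen, htmax⟩
        by_contra hne
        exact absurd (lt_of_lt_of_le (hstrict t htlen hne) (htmax (tstar w) hlen)) (lt_irrefl _)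
    · intro y
      exact hreach (List.ofFn y)
  refine ⟨⟨I, hmain⟩, ?_⟩
  intro y
  have heq : ∀ᶠ i in Filter.atTop,
      (if IsLookahead K T (p i) y then (1 : ℝ) else 0) =
        (if IsLookahead K T pstar y then (1 : ℝ) else 0) := by
    rw [Filter.eventually_atTop]
    exact ⟨I + 1, fun i hi => by rw [if_congr ((hmain i (by omega)).2 y) rfl rfl]⟩
  exact Filter.Tendsto.congr' (Filter.EventuallyEq.symm heq) tendsto_const_nhds
end

section
/- For every L ∈ ℕ, all K₁, K₂ ∈ {1, …, L−1} with K₁ < K₂, every T₁ ∈ {1, …, K₁}, every T₂ ∈ {1, …, K₂}, and every N ∈ {1, …, L}, there exists a finite vocabulary V (one may take |V| = 3) and a probability distribution p on Y = V^L, tie-free for both (K₁, T₁) and (K₂, T₂), such that the K₁_{T₁}-lookahead output D_{K₁,T₁}(p) minimizes the expected N-gram Hamming loss E_{y∼p}[ℓ_N(·, y)] over Y, while the K₂_{T₂}-lookahead output D_{K₂,T₂}(p) does not. That is, the class of distributions for which K_T-lookahead is N-gram Hamming optimal is not monotone in K. -/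
/-
The distribution has four atoms over the alphabet {0, 1, 2}: the zero sequence (mass 20/50), the
zero sequence with a 1 at position K₂ - 1 (6/50), a head block of 2's on positions 0..b (13/50),
and that block with a 1 at position K₂ (11/50). A lookahead window of length K₁ sees neither 1, so
it weighs the zero prefix (26/50) against the head prefix (24/50) and follows the zero sequence. A
window of length K₂ sees the first 1 but not the second, so the head prefix (24/50) now beats the
zero prefix (20/50) and the K₂-lookahead decoder commits to the head block.

The expected N-gram Hamming loss is L - N + 1 minus the expected number of matching windows.
Window by window no sequence matches more mass than the zero sequence, and the head block matches
strictly less on the first window. The exception is N = K₂, where the first window is exactly the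
K₂-lookahead window; a head block of length two (b = 1) lets the second window pay for it.
-/

/- The N-gram Hamming loss: the number of positions `i ∈ {0, …, L-N}` (0-indexed) at which
the length-`N` subsequences of `a` and `b` starting at `i` differ. -/
open Classical in
noncomputable def ngramLoss {V : Type*} {L : ℕ} (N : ℕ) (a b : Fin L → V) : ℝ :=
  ∑ i ∈ Finset.range (L - N + 1),
    if ∀ k : ℕ, k < N → ∀ h : i + k < L, a ⟨i + k, h⟩ = b ⟨i + k, h⟩ then 0 else 1

/- `gscore N p a = Σ_{i=0}^{L-N} P_{z∼p}(z_{i:i+N-1} = a_{i:i+N-1})`. -/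
open Classical in
noncomputable def gscore {V : Type*} [Fintype V] {L : ℕ} (N : ℕ)
    (p : (Fin L → V) → ℝ) (a : Fin L → V) : ℝ :=
  ∑ i ∈ Finset.range (L - N + 1),
    ∑ z : Fin L → V,
      if ∀ k : ℕ, k < N → ∀ h : i + k < L, z ⟨i + k, h⟩ = a ⟨i + k, h⟩ then p z else 0

namespace LookaheadCounterexample

variable {V : Type*} {L : ℕ}

def segment (X : Fin L → V) (m c : ℕ) : List V := ((List.ofFn X).take (m + c)).drop m

theorem length_segment (X : Fin L → V) {m c : ℕ} (h : m + c ≤ L) :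
    (segment X m c).length = c := by
  simp [segment]; omega

theorem take_segment (X : Fin L → V) (m c s : ℕ) :
    (segment X m c).take s = segment X m (min s c) := by
  rw [segment, segment, List.take_drop, List.take_take]; congr 2; omega

theorem take_append_segment (X : Fin L → V) (m c : ℕ) :
    (List.ofFn X).take m ++ segment X m c = (List.ofFn X).take (m + c) := by
  conv_rhs => rw [← List.take_append_drop m ((List.ofFn X).take (m + c))]
  rw [segment, List.take_take, min_eq_left (Nat.le_add_right m c)]

theorem take_ofFn_prefix_iff {X Y : Fin L → V} {m : ℕ} (hm : m ≤ L) :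
    (List.ofFn X).take m <+: List.ofFn Y ↔ ∀ i : Fin L, (i : ℕ) < m → X i = Y i := by
  rw [List.prefix_iff_getElem]
  simp only [List.length_take, List.length_ofFn, List.getElem_take, List.getElem_ofFn]
  constructor
  · rintro ⟨_, h⟩ i hi
    exact h i (by omega)
  · intro h
    refine ⟨by omega, fun i hi => ?_⟩
    exact h ⟨i, by omega⟩ (by simp; omega)

theorem segment_eq_segment_iff {X Y : Fin L → V} {m c : ℕ} (h : m + c ≤ L) :
    segment X m c = segment Y m c ↔ ∀ i : Fin L, m ≤ i → (i : ℕ) < m + c → X i = Y i := by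
  rw [List.ext_getElem_iff]
  simp only [segment, List.length_drop, List.length_take, List.length_ofFn, List.getElem_drop,
    List.getElem_take, List.getElem_ofFn, true_and]
  constructor
  · intro hs i h1 h2
    simpa [Nat.add_sub_cancel' h1] using hs (i - m) (by omega) (by omega)
  · intro hs j h1 _
    exact hs ⟨m + j, by omega⟩ (by simp) (by simp; omega)

theorem take_append_prefix_ofFn_iff {X Y : Fin L → V} {m c : ℕ} (h : m + c ≤ L) {t : List V}
    (ht : t.length = c) :
    (List.ofFn X).take m ++ t <+: List.ofFn Y ↔
      ((List.ofFn X).take m <+: List.ofFn Y) ∧ t = segment Y m c := by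
  have hm : ((List.ofFn X).take m).length = m := by simp; omega
  rw [List.prefix_iff_eq_take, List.prefix_iff_eq_take (l₁ := List.take m _), hm,
    List.length_append, hm, ht, ← take_append_segment Y m c]
  constructor
  · intro he
    exact List.append_inj he (by simp)
  · rintro ⟨h1, rfl⟩
    rw [← h1]

theorem not_take_ofFn_prefix {X Y : Fin L → V} {m : ℕ} (hm : m ≤ L) {j : Fin L} (hj : (j : ℕ) < m)
    (hne : X j ≠ Y j) : ¬ (List.ofFn X).take m <+: List.ofFn Y :=
  fun h => hne ((take_ofFn_prefix_iff hm).mp h j hj)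

section Decoder

variable [Fintype V] {K T m : ℕ} {p : (Fin L → V) → ℝ} {X : Fin L → V}

open Classical in
theorem le_prefixProb (hp : ∀ y, 0 ≤ p y) {w : List V} (hw : w <+: List.ofFn X) :
    p X ≤ prefixProb p w := by
  unfold prefixProb
  refine le_of_eq_of_le (if_pos hw).symm
    (Finset.single_le_sum (f := fun y => if w <+: List.ofFn y then p y else 0) (fun y _ => ?_)
      (Finset.mem_univ X))
  split_ifs
  exacts [hp y, le_rfl]

theorem prefixProb_take_pos (hp : ∀ y, 0 ≤ p y) (hX : 0 < p X) (m : ℕ) :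
    0 < prefixProb p ((List.ofFn X).take m) :=
  hX.trans_le (le_prefixProb hp (List.take_prefix m _))

def IsDominantPath (K : ℕ) (p : (Fin L → V) → ℝ) (X : Fin L → V) : Prop :=
  ∀ m < L, ∀ t : List V, t.length = min K (L - m) → t ≠ segment X m (min K (L - m)) →
    prefixProb p ((List.ofFn X).take m ++ t) <
      prefixProb p ((List.ofFn X).take m ++ segment X m (min K (L - m)))

theorem IsDominantPath.isMaximizer_iff (hX : IsDominantPath K p X)
    (hpos : 0 < prefixProb p ((List.ofFn X).take m)) (hm : m < L) {t : List V}
    (ht : t.length = min K (L - m)) :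
    (∀ t' : List V, t'.length = min K (L - m) →
        condProb p ((List.ofFn X).take m) t' ≤ condProb p ((List.ofFn X).take m) t) ↔
      t = segment X m (min K (L - m)) := by
  simp only [condProb, div_le_div_iff_of_pos_right hpos]
  constructor
  · intro hmax
    by_contra hne
    exact (hX m hm t ht hne).not_ge (hmax _ (length_segment X (by omega)))
  · rintro rfl t' ht'
    by_cases he : t' = segment X m (min K (L - m))
    · rw [he]
    · exact (hX m hm t' ht' he).le

theorem IsDominantPath.lookStep_take_iff (hp : ∀ y, 0 ≤ p y) (hX0 : 0 < p X)
    (hX : IsDominantPath K p X) (hm : m < L) {w : List V} :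
    LookStep K T p ((List.ofFn X).take m) w ↔
      w = (List.ofFn X).take (m + min (min T K) (L - m)) := by
  have hlen : ((List.ofFn X).take m).length = m := by simp; omega
  have hseg : (segment X m (min K (L - m))).length = min K (L - m) := length_segment X (by omega)
  simp only [LookStep, hlen, hm, true_and]
  constructor
  · rintro ⟨t, ht, hmax, rfl⟩
    rw [(hX.isMaximizer_iff (prefixProb_take_pos hp hX0 m) hm ht).mp hmax, take_segment,
      take_append_segment]
    congr 2; omega
  · rintro rfl
    refine ⟨_, hseg, (hX.isMaximizer_iff (prefixProb_take_pos hp hX0 m) hm hseg).mpr rfl, ?_⟩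
    rw [take_segment, take_append_segment]
    congr 2; omega

theorem IsDominantPath.eq_take_of_reachable (hp : ∀ y, 0 ≤ p y) (hX0 : 0 < p X)
    (hX : IsDominantPath K p X) {w : List V} (hw : Reachable K T p w) :
    ∃ m ≤ L, w = (List.ofFn X).take m := by
  induction hw with
  | refl => exact ⟨0, by omega, by simp⟩
  | tail _ hstep ih =>
    obtain ⟨m, hm, rfl⟩ := ih
    have hmL : m < L := by simpa [min_eq_left hm] using hstep.1
    exact ⟨_, by omega, (hX.lookStep_take_iff hp hX0 hmL).mp hstep⟩

theorem IsDominantPath.tieFree (hp : ∀ y, 0 ≤ p y) (hX0 : 0 < p X)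
    (hX : IsDominantPath K p X) : TieFree K T p := by
  intro w hw hwL
  obtain ⟨m, hm, rfl⟩ := hX.eq_take_of_reachable hp hX0 hw
  have hlen : ((List.ofFn X).take m).length = m := by simp; omega
  rw [hlen] at hwL ⊢
  refine ⟨segment X m (min K (L - m)), ⟨length_segment X (by omega), ?_⟩, ?_⟩
  · exact (hX.isMaximizer_iff (prefixProb_take_pos hp hX0 m) hwL
      (length_segment X (by omega))).mpr rfl
  · rintro t ⟨ht, hmax⟩
    exact (hX.isMaximizer_iff (prefixProb_take_pos hp hX0 m) hwL ht).mp hmax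

theorem IsDominantPath.isLookahead (hp : ∀ y, 0 ≤ p y) (hX0 : 0 < p X)
    (hX : IsDominantPath K p X) (hK : 1 ≤ K) (hT : 1 ≤ T) : IsLookahead K T p X := by
  unfold IsLookahead Reachable
  suffices h : ∀ n m, L - m ≤ n →
      Relation.ReflTransGen (LookStep K T p) ((List.ofFn X).take m) (List.ofFn X) by
    simpa using h L 0 (Nat.sub_le L 0)
  intro n
  induction n with
  | zero =>
    intro m hm
    rw [List.take_of_length_le (by simp; omega)]
  | succ n ih =>
    intro m hm
    rcases lt_or_ge m L with hmL | hmL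
    · exact .head ((hX.lookStep_take_iff hp hX0 hmL).mpr rfl) (ih _ (by omega))
    · rw [List.take_of_length_le (by simp; omega)]

end Decoder

section Loss

variable [Fintype V] {p : (Fin L → V) → ℝ}

open Classical in
theorem sum_mul_ngramLoss_eq (hp1 : ∑ y, p y = 1) (N : ℕ) (a : Fin L → V) :
    ∑ y, p y * ngramLoss N a y = (L - N + 1 : ℕ) - gscore N p a := by
  have key : ∀ i y, p y * (if ∀ k, k < N → ∀ h : i + k < L, a ⟨i + k, h⟩ = y ⟨i + k, h⟩
      then 0 else 1) = p y - if ∀ k, k < N → ∀ h : i + k < L, y ⟨i + k, h⟩ = a ⟨i + k, h⟩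
      then p y else 0 := by
    intro i y
    simp only [@eq_comm V (a _)]
    split_ifs <;> ring
  simp only [ngramLoss, gscore, Finset.mul_sum, key]
  rw [Finset.sum_comm]
  simp [Finset.sum_sub_distrib, hp1]

end Loss

section AtomDist

variable {ι : Type*} [Fintype ι] (a : ι → Fin L → V) (w : ι → ℝ)

open Classical in
noncomputable def atomDist (y : Fin L → V) : ℝ := ∑ j, if y = a j then w j else 0

theorem sum_ite_atomDist [Fintype V] (Q : (Fin L → V) → Prop) [DecidablePred Q] :
    ∑ y, (if Q y then atomDist a w y else 0) = ∑ j, if Q (a j) then w j else 0 := by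
  classical
  simp only [atomDist, Finset.ite_sum_zero]
  rw [Finset.sum_comm]
  refine Finset.sum_congr rfl fun j _ => ?_
  rw [Finset.sum_eq_single (a j) (fun y _ hy => by simp [hy]) (by simp)]
  simp

theorem sum_atomDist [Fintype V] : ∑ y, atomDist a w y = ∑ j, w j := by
  simpa using sum_ite_atomDist a w (fun _ => True)

variable {a w}

theorem atomDist_nonneg (hw : ∀ j, 0 ≤ w j) (y : Fin L → V) : 0 ≤ atomDist a w y := by
  unfold atomDist
  exact Finset.sum_nonneg fun j _ => by split_ifs <;> simp [hw]

open Classical in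
theorem le_atomDist (hw : ∀ j, 0 ≤ w j) (j : ι) : w j ≤ atomDist a w (a j) := by
  unfold atomDist
  refine le_of_eq_of_le (if_pos rfl).symm
    (Finset.single_le_sum (f := fun k => if a j = a k then w k else 0) (fun k _ => ?_)
      (Finset.mem_univ j))
  split_ifs <;> simp [hw]

theorem prefixProb_atomDist [Fintype V] (u : List V)
    [∀ y : Fin L → V, Decidable (u <+: List.ofFn y)] :
    prefixProb (atomDist a w) u = ∑ j, if u <+: List.ofFn (a j) then w j else 0 := by
  unfold prefixProb
  convert sum_ite_atomDist a w (fun y => u <+: List.ofFn y)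

end AtomDist

section Window

def WindowEq (N i : ℕ) (a b : Fin L → V) : Prop :=
  ∀ k : ℕ, k < N → ∀ h : i + k < L, a ⟨i + k, h⟩ = b ⟨i + k, h⟩

variable {N i : ℕ} {a b c : Fin L → V}

theorem windowEq_iff : WindowEq N i a b ↔ ∀ j : Fin L, i ≤ j → (j : ℕ) < i + N → a j = b j := by
  constructor
  · intro h j h1 h2
    simpa [Nat.add_sub_cancel' h1] using h (j - i) (by omega) (by omega)
  · intro h k hk hik
    exact h _ (by simp) (by simp; omega)

theorem WindowEq.refl (a : Fin L → V) : WindowEq N i a a := fun _ _ _ => rfl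

theorem WindowEq.symm (h : WindowEq N i a b) : WindowEq N i b a :=
  fun k hk hik => (h k hk hik).symm

theorem WindowEq.trans (h : WindowEq N i a b) (h' : WindowEq N i b c) :
    WindowEq N i a c :=
  fun k hk hik => (h k hk hik).trans (h' k hk hik)

theorem WindowEq.apply (h : WindowEq N i a b) {j : Fin L} (h1 : i ≤ j) (h2 : (j : ℕ) < i + N) :
    a j = b j :=
  windowEq_iff.mp h j h1 h2

theorem not_windowEq_of_ne {j : Fin L} (h1 : i ≤ j)
    (h2 : (j : ℕ) < i + N) (hne : a j ≠ b j) : ¬ WindowEq N i a b :=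
  fun h => hne (h.apply h1 h2)

open Classical in
noncomputable def windowScore {ι : Type*} [Fintype ι] (N i : ℕ) (a : ι → Fin L → V) (w : ι → ℝ)
    (y : Fin L → V) : ℝ :=
  ∑ j, if WindowEq N i (a j) y then w j else 0

theorem windowScore_congr {ι : Type*} [Fintype ι] {a : ι → Fin L → V} {w : ι → ℝ}
    (h : WindowEq N i b c) : windowScore N i a w b = windowScore N i a w c := by
  unfold windowScore
  congr! 2 with j
  exact ⟨fun h' => h'.trans h, fun h' => h'.trans h.symm⟩

open Classical in
theorem gscore_atomDist [Fintype V] {ι : Type*} [Fintype ι] (a : ι → Fin L → V) (w : ι → ℝ)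
    (N : ℕ) (y : Fin L → V) :
    gscore N (atomDist a w) y = ∑ i ∈ Finset.range (L - N + 1), windowScore N i a w y :=
  Finset.sum_congr rfl fun i _ => by
    rw [windowScore, ← sum_ite_atomDist a w (fun z => WindowEq N i z y)]
    exact Finset.sum_congr rfl fun z _ => by congr 1

end Window

section Construction

def zeroSeq : Fin L → Fin 3 := fun _ => 0

def spikeSeq (d : ℕ) : Fin L → Fin 3 := fun j => if (j : ℕ) = d then 1 else 0

def headSeq (b : ℕ) : Fin L → Fin 3 := fun j => if (j : ℕ) ≤ b then 2 else 0

def headSpikeSeq (b d : ℕ) : Fin L → Fin 3 := fun j => if (j : ℕ) = d then 1 else headSeq b j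

def trapAtoms (L K b : ℕ) : Fin 4 → Fin L → Fin 3 :=
  ![zeroSeq, spikeSeq (K - 1), headSeq b, headSpikeSeq b K]

noncomputable def trapWeights : Fin 4 → ℝ := ![2/5, 3/25, 13/50, 11/50]

noncomputable def trapDist (L K b : ℕ) : (Fin L → Fin 3) → ℝ :=
  atomDist (trapAtoms L K b) trapWeights

theorem trapWeights_nonneg (j : Fin 4) : 0 ≤ trapWeights j := by
  fin_cases j <;> norm_num [trapWeights]

theorem sum_trapDist (L K b : ℕ) : ∑ y, trapDist L K b y = 1 := by
  rw [trapDist, sum_atomDist, Fin.sum_univ_four]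
  change (2/5 : ℝ) + 3/25 + 13/50 + 11/50 = 1
  norm_num

theorem trapDist_nonneg {K b : ℕ} (y : Fin L → Fin 3) : 0 ≤ trapDist L K b y :=
  atomDist_nonneg trapWeights_nonneg y

theorem trapDist_atom_pos {K b : ℕ} (j : Fin 4) : 0 < trapDist L K b (trapAtoms L K b j) :=
  lt_of_lt_of_le (by fin_cases j <;> norm_num [trapWeights]) (le_atomDist trapWeights_nonneg j)

theorem prefixProb_trapDist {K b : ℕ} (u : List (Fin 3)) :
    prefixProb (trapDist L K b) u =
      (if u <+: List.ofFn (zeroSeq (L := L)) then 2/5 else 0) +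
      (if u <+: List.ofFn (spikeSeq (L := L) (K - 1)) then 3/25 else 0) +
      (if u <+: List.ofFn (headSeq (L := L) b) then 13/50 else 0) +
      (if u <+: List.ofFn (headSpikeSeq (L := L) b K) then 11/50 else 0) := by
  rw [trapDist, prefixProb_atomDist, Fin.sum_univ_four]
  rfl

theorem isDominantPath_zeroSeq {K₁ K b : ℕ} (hK : K₁ < K) :
    IsDominantPath K₁ (trapDist L K b) zeroSeq := by
  intro m hm t ht hne
  have hc : m + min K₁ (L - m) ≤ L := by omega
  simp only [prefixProb_trapDist, take_append_prefix_ofFn_iff hc ht,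
    take_append_prefix_ofFn_iff hc (length_segment _ hc), hne, and_false, if_false,
    List.take_prefix, and_true, if_true, zero_add]
  rcases Nat.eq_zero_or_pos m with rfl | hm0
  · have hspike : segment zeroSeq 0 (min K₁ L) = segment (spikeSeq (L := L) (K - 1)) 0 (min K₁ L) :=
      (segment_eq_segment_iff (by omega)).mpr fun j _ hj => by
        simp only [zeroSeq, spikeSeq]; rw [if_neg (by omega)]
    simp only [Nat.sub_zero] at hne ⊢
    rw [hspike] at hne
    simp only [List.take_zero, List.nil_prefix, true_and, hspike, hne, if_false]
    split_ifs <;> norm_num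
  · -- Past position 0 at most the zero sequence and its spike remain, and the former is heavier.
    have h0 : ((⟨0, by omega⟩ : Fin L) : ℕ) < m := hm0
    have hK0 : (0 : ℕ) ≠ K := by omega
    simp only [
      not_take_ofFn_prefix hm.le h0 (by simp [zeroSeq, headSeq] : zeroSeq _ ≠ headSeq b _),
      not_take_ofFn_prefix hm.le h0 (by simp [zeroSeq, headSeq, headSpikeSeq, hK0] :
        zeroSeq _ ≠ headSpikeSeq b K _),
      false_and, if_false, add_zero]
    split_ifs <;> norm_num

theorem isDominantPath_headSeq {K b : ℕ} (hK : 2 ≤ K) (hKL : K ≤ L) :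
    IsDominantPath K (trapDist L K b) (headSeq b) := by
  intro m hm t ht hne
  have hc : m + min K (L - m) ≤ L := by omega
  simp only [prefixProb_trapDist, take_append_prefix_ofFn_iff hc ht,
    take_append_prefix_ofFn_iff hc (length_segment _ hc), hne, and_false, if_false,
    List.take_prefix, and_true, if_true, add_zero]
  rcases Nat.eq_zero_or_pos m with rfl | hm0
  · have hc' : 0 + K ≤ L := by omega
    have hhead : segment (headSeq b) 0 K = segment (headSpikeSeq (L := L) b K) 0 K :=
      (segment_eq_segment_iff hc').mpr fun j _ hj => by
        simp only [headSpikeSeq]; rw [if_neg (by omega)]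
    have hspike : segment zeroSeq 0 K ≠ segment (spikeSeq (L := L) (K - 1)) 0 K := fun h => by
      have := ((segment_eq_segment_iff hc').mp h) ⟨K - 1, by omega⟩ (by simp) (by simp; omega)
      simp [zeroSeq, spikeSeq] at this
    simp only [Nat.sub_zero, min_eq_left hKL] at hne ⊢
    rw [hhead] at hne
    simp only [List.take_zero, List.nil_prefix, true_and, hhead, hne, if_false, if_true]
    by_cases hA : t = segment (zeroSeq (L := L)) 0 K
    · simp only [hA, hspike, if_false, if_true]
      split_ifs <;> norm_num
    · simp only [hA, if_false]
      split_ifs <;> norm_num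
  · have h0 : ((⟨0, by omega⟩ : Fin L) : ℕ) < m := hm0
    have hK0 : (0 : ℕ) ≠ K - 1 := by omega
    simp only [
      not_take_ofFn_prefix hm.le h0 (by simp [zeroSeq, headSeq] : headSeq b _ ≠ zeroSeq _),
      not_take_ofFn_prefix hm.le h0 (by simp [spikeSeq, headSeq, hK0] :
        headSeq b _ ≠ spikeSeq (K - 1) _),
      false_and, if_false, zero_add]
    split_ifs <;> norm_num

end Construction

section TrapScore

variable {N K b i : ℕ}

open Classical in
theorem windowScore_trap (y : Fin L → Fin 3) :
    windowScore N i (trapAtoms L K b) trapWeights y =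
      (if WindowEq N i zeroSeq y then 2/5 else 0) +
      (if WindowEq N i (spikeSeq (K - 1)) y then 3/25 else 0) +
      (if WindowEq N i (headSeq b) y then 13/50 else 0) +
      (if WindowEq N i (headSpikeSeq b K) y then 11/50 else 0) := by
  rw [windowScore, Fin.sum_univ_four]
  rfl

theorem two_fifths_le_windowScore_zeroSeq :
    2/5 ≤ windowScore N i (trapAtoms L K b) trapWeights zeroSeq := by
  rw [windowScore_trap, if_pos (WindowEq.refl _)]
  split_ifs <;> norm_num

theorem windowScore_le_of_not_windowEq_headSeq {y : Fin L → Fin 3}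
    (hy : ¬ WindowEq N i (headSeq b) y) :
    windowScore N i (trapAtoms L K b) trapWeights y ≤
      windowScore N i (trapAtoms L K b) trapWeights zeroSeq := by
  by_cases hA : WindowEq N i zeroSeq y
  · exact (windowScore_congr hA.symm).le
  · refine le_trans ?_ two_fifths_le_windowScore_zeroSeq
    rw [windowScore_trap, if_neg hA, if_neg hy]
    split_ifs <;> norm_num

theorem windowScore_le_of_lt (hb : b < i) (y : Fin L → Fin 3) :
    windowScore N i (trapAtoms L K b) trapWeights y ≤
      windowScore N i (trapAtoms L K b) trapWeights zeroSeq := by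
  by_cases hT : WindowEq N i (headSeq b) y
  · have hzero : WindowEq N i (headSeq b) (zeroSeq (L := L)) := windowEq_iff.mpr fun j hj _ => by
      simp only [headSeq, zeroSeq]; rw [if_neg (by omega)]
    exact (windowScore_congr (hT.symm.trans hzero)).le
  · exact windowScore_le_of_not_windowEq_headSeq hT

theorem not_windowEq_zeroSeq_of_two {y : Fin L → Fin 3} {j : Fin L} (h1 : i ≤ j)
    (h2 : (j : ℕ) < i + N) (hy : y j = 2) :
    ¬ WindowEq N i zeroSeq y ∧ ¬ WindowEq N i (spikeSeq (K - 1)) y := by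
  refine ⟨not_windowEq_of_ne h1 h2 (by simp [zeroSeq, hy]), not_windowEq_of_ne h1 h2 ?_⟩
  simp only [spikeSeq, hy]
  split_ifs <;> decide

theorem not_windowEq_headSpikeSeq {y : Fin L → Fin 3} (hKL : K < L) (h1 : i ≤ K)
    (h2 : K < i + N) (hT : WindowEq N i (headSeq b) y) :
    ¬ WindowEq N i (headSpikeSeq b K) y := fun h => by
  have := (hT.trans h.symm).apply (j := ⟨K, hKL⟩) h1 h2
  simp only [headSeq, headSpikeSeq, if_true] at this
  split_ifs at this <;> simp at this

theorem windowScore_zero_lt_of_ne (hN : 1 ≤ N) (hNK : N ≠ K) (hK : 2 ≤ K) (hKL : K < L)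
    {y : Fin L → Fin 3} (hy : y ⟨0, by omega⟩ = 2) :
    windowScore N 0 (trapAtoms L K 0) trapWeights y <
      windowScore N 0 (trapAtoms L K 0) trapWeights zeroSeq := by
  obtain ⟨hA, hH⟩ := not_windowEq_zeroSeq_of_two (N := N) (i := 0) (K := K)
    (j := ⟨0, by omega⟩) le_rfl (by simp; omega) hy
  rcases Nat.lt_or_gt_of_ne hNK with hlt | hgt
  · have hAH : WindowEq N 0 (spikeSeq (L := L) (K - 1)) zeroSeq := windowEq_iff.mpr fun j _ hj => by
      simp only [zeroSeq, spikeSeq]; rw [if_neg (by omega)]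
    rw [windowScore_trap, windowScore_trap, if_neg hA, if_neg hH, if_pos (WindowEq.refl _),
      if_pos hAH]
    split_ifs <;> norm_num
  · refine lt_of_lt_of_le ?_ two_fifths_le_windowScore_zeroSeq
    rw [windowScore_trap, if_neg hA, if_neg hH]
    by_cases hT : WindowEq N 0 (headSeq 0) y
    · rw [if_pos hT, if_neg (not_windowEq_headSpikeSeq hKL (Nat.zero_le K) (by omega) hT)]
      norm_num
    · rw [if_neg hT]
      split_ifs <;> norm_num

theorem windowScore_zero_add_one_lt (hK : 2 ≤ K) (hKL : K < L) {y : Fin L → Fin 3}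
    (hy : y ⟨1, by omega⟩ = 2) :
    windowScore K 0 (trapAtoms L K 1) trapWeights y +
        windowScore K 1 (trapAtoms L K 1) trapWeights y <
      windowScore K 0 (trapAtoms L K 1) trapWeights zeroSeq +
        windowScore K 1 (trapAtoms L K 1) trapWeights zeroSeq := by
  obtain ⟨hA₀, hH₀⟩ := not_windowEq_zeroSeq_of_two (N := K) (i := 0) (K := K)
    (j := ⟨1, by omega⟩) (by simp) (by simp; omega) hy
  obtain ⟨hA₁, hH₁⟩ := not_windowEq_zeroSeq_of_two (N := K) (i := 1) (K := K)
    (j := ⟨1, by omega⟩) (by simp) (by simp; omega) hy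
  have h₀ : windowScore K 0 (trapAtoms L K 1) trapWeights y ≤ 24/50 := by
    rw [windowScore_trap, if_neg hA₀, if_neg hH₀]
    split_ifs <;> norm_num
  have h₁ : windowScore K 1 (trapAtoms L K 1) trapWeights y ≤ 13/50 := by
    rw [windowScore_trap, if_neg hA₁, if_neg hH₁]
    by_cases hT : WindowEq K 1 (headSeq 1) y
    · rw [if_pos hT, if_neg (not_windowEq_headSpikeSeq hKL (by omega) (by omega) hT)]
      norm_num
    · rw [if_neg hT]
      split_ifs <;> norm_num
  linarith [two_fifths_le_windowScore_zeroSeq (L := L) (N := K) (i := 0) (K := K) (b := 1),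
    two_fifths_le_windowScore_zeroSeq (L := L) (N := K) (i := 1) (K := K) (b := 1)]

end TrapScore

section TrapGscore

variable {N K b : ℕ}

theorem gscore_le_zeroSeq_of_ne_two (hbN : b < N) (hb : b < L) {y : Fin L → Fin 3}
    (hy : y ⟨b, hb⟩ ≠ 2) : gscore N (trapDist L K b) y ≤ gscore N (trapDist L K b) zeroSeq := by
  simp only [trapDist, gscore_atomDist]
  refine Finset.sum_le_sum fun i _ => ?_
  rcases lt_or_ge b i with hbi | hib
  · exact windowScore_le_of_lt hbi y
  · refine windowScore_le_of_not_windowEq_headSeq (not_windowEq_of_ne (j := ⟨b, hb⟩) hib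
      (by simp; omega) ?_)
    simpa [headSeq] using Ne.symm hy

theorem gscore_lt_zeroSeq_of_ne (hN : 1 ≤ N) (hNK : N ≠ K) (hK : 2 ≤ K) (hKL : K < L)
    {y : Fin L → Fin 3} (hy : y ⟨0, by omega⟩ = 2) :
    gscore N (trapDist L K 0) y < gscore N (trapDist L K 0) zeroSeq := by
  simp only [trapDist, gscore_atomDist]
  have h₀ := windowScore_zero_lt_of_ne hN hNK hK hKL hy
  refine Finset.sum_lt_sum (fun i _ => ?_) ⟨0, by simp, h₀⟩
  rcases Nat.eq_zero_or_pos i with rfl | hi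
  · exact h₀.le
  · exact windowScore_le_of_lt hi y

theorem gscore_lt_zeroSeq_of_eq (hK : 2 ≤ K) (hKL : K < L) {y : Fin L → Fin 3}
    (hy : y ⟨1, by omega⟩ = 2) :
    gscore K (trapDist L K 1) y < gscore K (trapDist L K 1) zeroSeq := by
  simp only [trapDist, gscore_atomDist]
  obtain ⟨n, hn⟩ : ∃ n, L - K + 1 = n + 2 := ⟨L - K - 1, by omega⟩
  rw [hn, Finset.sum_range_succ', Finset.sum_range_succ', Finset.sum_range_succ',
    Finset.sum_range_succ']
  have hrest := Finset.sum_le_sum fun i (_ : i ∈ Finset.range n) =>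
    windowScore_le_of_lt (N := K) (K := K) (b := 1) (i := i + 1 + 1) (by omega) y
  linarith [windowScore_zero_add_one_lt hK hKL hy]

theorem exists_gscore_trapDist (hN : 1 ≤ N) (hK : 2 ≤ K) (hKL : K < L) :
    ∃ b, (∀ y, gscore N (trapDist L K b) y ≤ gscore N (trapDist L K b) zeroSeq) ∧
      gscore N (trapDist L K b) (headSeq b) < gscore N (trapDist L K b) zeroSeq := by
  obtain ⟨b, hbN, hbL, hlt⟩ : ∃ b < N, ∃ hb : b < L, ∀ y : Fin L → Fin 3, y ⟨b, hb⟩ = 2 →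
      gscore N (trapDist L K b) y < gscore N (trapDist L K b) zeroSeq := by
    rcases eq_or_ne N K with rfl | hNK
    · exact ⟨1, by omega, by omega, fun y hy => gscore_lt_zeroSeq_of_eq hK hKL hy⟩
    · exact ⟨0, hN, by omega, fun y hy => gscore_lt_zeroSeq_of_ne hN hNK hK hKL hy⟩
  refine ⟨b, fun y => ?_, hlt _ (by simp [headSeq])⟩
  by_cases hy : y ⟨b, hbL⟩ = 2
  · exact (hlt y hy).le
  · exact gscore_le_zeroSeq_of_ne_two hbN hbL hy

end TrapGscore

end LookaheadCounterexample

open LookaheadCounterexample in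
theorem stmt6_general {L K₁ K₂ T₁ T₂ N : ℕ}
    (hK₁ : 1 ≤ K₁) (hK₂L : K₂ < L) (hKK : K₁ < K₂)
    (hT₁ : 1 ≤ T₁) (hT₂ : 1 ≤ T₂)
    (hN : 1 ≤ N) :
    ∃ p : (Fin L → Fin 3) → ℝ,
      (∀ y, 0 ≤ p y) ∧ (∑ y, p y = 1) ∧
      TieFree K₁ T₁ p ∧ TieFree K₂ T₂ p ∧
      ∃ y₁ y₂ : Fin L → Fin 3,
        IsLookahead K₁ T₁ p y₁ ∧ IsLookahead K₂ T₂ p y₂ ∧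
        (∀ y' : Fin L → Fin 3,
          ∑ y, p y * ngramLoss N y₁ y ≤ ∑ y, p y * ngramLoss N y' y) ∧
        ¬ (∀ y' : Fin L → Fin 3,
          ∑ y, p y * ngramLoss N y₂ y ≤ ∑ y, p y * ngramLoss N y' y) := by
  obtain ⟨b, hopt, hsub⟩ := exists_gscore_trapDist hN (by omega : 2 ≤ K₂) hK₂L
  have hp1 := sum_trapDist L K₂ b
  have hzero := isDominantPath_zeroSeq (L := L) (b := b) hKK
  have hhead := isDominantPath_headSeq (b := b) (by omega : 2 ≤ K₂) hK₂L.le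
  refine ⟨trapDist L K₂ b, trapDist_nonneg, hp1,
    hzero.tieFree trapDist_nonneg (trapDist_atom_pos 0),
    hhead.tieFree trapDist_nonneg (trapDist_atom_pos 2), zeroSeq, headSeq b,
    hzero.isLookahead trapDist_nonneg (trapDist_atom_pos 0) hK₁ hT₁,
    hhead.isLookahead trapDist_nonneg (trapDist_atom_pos 2) (by omega) hT₂,
    fun y => ?_, fun h => ?_⟩
  · rw [sum_mul_ngramLoss_eq hp1, sum_mul_ngramLoss_eq hp1]
    linarith [hopt y]
  · have h := h zeroSeq
    rw [sum_mul_ngramLoss_eq hp1, sum_mul_ngramLoss_eq hp1] at h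
    linarith

theorem stmt6 {L K₁ K₂ T₁ T₂ N : ℕ}
    (hK₁ : 1 ≤ K₁) (hK₁L : K₁ < L) (hK₂L : K₂ < L) (hKK : K₁ < K₂)
    (hT₁ : 1 ≤ T₁) (hT₁K : T₁ ≤ K₁) (hT₂ : 1 ≤ T₂) (hT₂K : T₂ ≤ K₂)
    (hN : 1 ≤ N) (hNL : N ≤ L) :
    ∃ p : (Fin L → Fin 3) → ℝ,
      (∀ y, 0 ≤ p y) ∧ (∑ y, p y = 1) ∧
      TieFree K₁ T₁ p ∧ TieFree K₂ T₂ p ∧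
      ∃ y₁ y₂ : Fin L → Fin 3,
        IsLookahead K₁ T₁ p y₁ ∧ IsLookahead K₂ T₂ p y₂ ∧
        (∀ y' : Fin L → Fin 3,
          ∑ y, p y * ngramLoss N y₁ y ≤ ∑ y, p y * ngramLoss N y' y) ∧
        ¬ (∀ y' : Fin L → Fin 3,
          ∑ y, p y * ngramLoss N y₂ y ≤ ∑ y, p y * ngramLoss N y' y) :=
  stmt6_general hK₁ hK₂L hKK hT₁ hT₂ hN
end

section
/- Let 1 ≤ T₁ < T₂ ≤ K ≤ L with K ≥ L − T₁, and let p be a probability distribution on Y = V^L that is tie-free for both (K, T₁) and (K, T₂). If the K_{T₂}-lookahead output D_{K,T₂}(p) maximizes p(y) over y ∈ Y (i.e., is optimal for the L-gram Hamming/0-1 loss), then the K_{T₁}-lookahead output D_{K,T₁}(p) also maximizes p(y) over y ∈ Y. -/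
/- STATEMENT 8: monotonicity when K ≥ L - T₁. Let 1 ≤ T₁ < T₂ ≤ K ≤ L with K ≥ L - T₁ and
let p be tie-free for (K,T₁) and (K,T₂). If the K_{T₂}-lookahead output maximizes p over Y
(0-1 loss optimal), then so does the K_{T₁}-lookahead output. -/
lemma prefixProb_ofFn {V : Type*} [Fintype V] {L : ℕ}
    (p : (Fin L → V) → ℝ) (z : Fin L → V) :
    prefixProb p (List.ofFn z) = p z := by
  unfold prefixProb
  rw [Finset.sum_eq_single z]
  · simp
  · intro y _ hy
    rw [if_neg]
    intro h
    exact hy (List.ofFn_injective (h.eq_of_length (by simp))).symm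
  · simp

lemma p_eq_zero_of_prefixProb {V : Type*} [Fintype V] {L : ℕ}
    (p : (Fin L → V) → ℝ) (hp0 : ∀ y, 0 ≤ p y) {w : List V}
    (hw : prefixProb p w = 0) {z : Fin L → V} (hz : w <+: List.ofFn z) : p z = 0 := by
  unfold prefixProb at hw
  have h := (Finset.sum_eq_zero_iff_of_nonneg (fun y _ => by
    by_cases hc : w <+: List.ofFn y <;> simp [hc, hp0 y])).mp hw z (Finset.mem_univ z)
  simpa [hz] using h

lemma reach_isPrefix {V : Type*} [Fintype V] {L K T : ℕ}
    (p : (Fin L → V) → ℝ) {u v : List V}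
    (h : Relation.ReflTransGen (LookStep (L := L) K T p) u v) : u <+: v := by
  induction h with
  | refl => exact List.prefix_refl _
  | tail _ hstep ih =>
      obtain ⟨_, t, _, _, rfl⟩ := hstep
      exact ih.trans (List.prefix_append _ _)

theorem stmt8 {V : Type*} [Fintype V] [Nonempty V] {L K T₁ T₂ : ℕ}
    (hT₁ : 1 ≤ T₁) (hTT : T₁ < T₂) (hT₂K : T₂ ≤ K) (hKL : K ≤ L) (hKLT : L - T₁ ≤ K)
    (p : (Fin L → V) → ℝ) (hp0 : ∀ y, 0 ≤ p y) (hp1 : ∑ y, p y = 1)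
    (htf1 : TieFree K T₁ p) (htf2 : TieFree K T₂ p) :
    ∀ y₂ : Fin L → V, IsLookahead K T₂ p y₂ → (∀ z, p z ≤ p y₂) →
      ∀ y₁ : Fin L → V, IsLookahead K T₁ p y₁ → ∀ z, p z ≤ p y₁ := by
  intro y₂ hlook2 hmax2 y₁ hlook1 z
  have hT₁L : T₁ ≤ L := le_trans (le_of_lt hTT) (le_trans hT₂K hKL)
  have hT₂L : T₂ ≤ L := le_trans hT₂K hKL
  have hL : 0 < L := lt_of_lt_of_le (lt_of_lt_of_le Nat.zero_lt_one hT₁) hT₁L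
  -- extract first steps
  rcases Relation.ReflTransGen.cases_head hlook1 with h | ⟨w1, hstep1, hrest1⟩
  · exact absurd h.symm (List.ne_nil_of_length_pos (by simpa using hL))
  rcases Relation.ReflTransGen.cases_head hlook2 with h | ⟨w2, hstep2, hrest2⟩
  · exact absurd h.symm (List.ne_nil_of_length_pos (by simpa using hL))
  obtain ⟨_, t₁, ht₁len, ht₁max, hw1⟩ := hstep1
  obtain ⟨_, t₂, ht₂len, ht₂max, hw2⟩ := hstep2
  -- uniqueness of the first argmax
  obtain ⟨t0, _, huniq⟩ := htf1 [] Relation.ReflTransGen.refl (by simpa using hL)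
  have e1 : t₁ = t0 := huniq t₁ ⟨ht₁len, ht₁max⟩
  have e2 : t₂ = t0 := huniq t₂ ⟨ht₂len, ht₂max⟩
  subst e1; subst e2
  -- w1 is a prefix of ofFn y₂
  have hw1' : w1 = List.take T₁ t₂ := by
    simpa [Nat.min_eq_left hT₁L] using hw1
  have hw2' : w2 = List.take T₂ t₂ := by
    simpa [Nat.min_eq_left hT₂L] using hw2
  have hw1w2 : w1 <+: w2 := by
    have : List.take T₁ w2 = w1 := by
      rw [hw1', hw2', List.take_take, Nat.min_eq_left (le_of_lt hTT)]
    rw [← this]; exact List.take_prefix _ _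
  have hw1y2 : w1 <+: List.ofFn y₂ := hw1w2.trans (reach_isPrefix p hrest2)
  have hw1len : w1.length = T₁ := by
    have h2 : t₂.length = K := by simpa [Nat.min_eq_left hKL] using ht₁len
    rw [hw1', List.length_take, h2]
    omega
  -- invariant
  have key : ∀ v, Relation.ReflTransGen (LookStep K T₁ p) w1 v →
      T₁ ≤ v.length ∧ ∃ u : Fin L → V, v <+: List.ofFn u ∧ p y₂ ≤ p u := by
    intro v hv
    induction hv with
    | refl => exact ⟨le_of_eq hw1len.symm, y₂, hw1y2, le_refl _⟩
    | @tail b c hab hbc ih =>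
        obtain ⟨hlb, u, hbu, hpu⟩ := ih
        obtain ⟨hbL, t, htlen, htmax, rfl⟩ := hbc
        have hcfull : min K (L - b.length) = L - b.length :=
          Nat.min_eq_right (le_trans (Nat.sub_le_sub_left hlb L) hKLT)
        rw [hcfull] at htlen htmax
        have hbtlen : (b ++ t).length = L := by
          rw [List.length_append, htlen]; omega
        -- the word corresponding to b ++ t
        obtain ⟨u', hu'⟩ : ∃ u' : Fin L → V, List.ofFn u' = b ++ t := by
          refine ⟨fun i => (b ++ t).get (Fin.cast hbtlen.symm i), ?_⟩
          apply List.ext_getElem (by simp [hbtlen])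
          intro i h1 h2
          simp [List.getElem_ofFn]
        have hpu' : p y₂ ≤ p u' := by
          by_cases hb0 : prefixProb p b = 0
          · have : p u = 0 := p_eq_zero_of_prefixProb p hp0 hb0 hbu
            exact le_trans (le_trans hpu (le_of_eq this)) (hp0 u')
          · obtain ⟨s, hs⟩ := hbu
            have hslen : s.length = L - b.length := by
              have := congrArg List.length hs
              simp [List.length_append] at this
              omega
            have hcmp := htmax s hslen
            unfold condProb at hcmp
            rw [hs, prefixProb_ofFn] at hcmp
            rw [← hu', prefixProb_ofFn] at hcmp
            have hbpos : 0 < prefixProb p b := by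
              rcases lt_or_eq_of_le (Finset.sum_nonneg (fun y _ => by
                by_cases hc : b <+: List.ofFn y <;> simp [prefixProb, hc, hp0 y]) :
                (0:ℝ) ≤ prefixProb p b) with h | h
              · exact h
              · exact absurd h.symm hb0
            have := (div_le_div_iff_of_pos_right hbpos).mp hcmp
            exact le_trans hpu this
        refine ⟨le_trans hlb (by simp [List.length_append]), u', ?_, hpu'⟩
        rw [hu']
        exact ⟨List.drop (min T₁ (L - b.length)) t, by simp⟩
  obtain ⟨_, u, hpre, hpu⟩ := key (List.ofFn y₁) hrest1
  have : y₁ = u := List.ofFn_injective (hpre.eq_of_length (by simp))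
  rw [this]
  exact le_trans (hmax2 z) hpu
end

section
/- Let S be a finite nonempty set, q a probability distribution on S, and γ > 0 with γ ≠ 1. Then q(s)^γ / Σ_{t∈S} q(t)^γ = q(s) for every s ∈ S if and only if all nonzero values of q are equal, i.e., q is the uniform distribution on its support (including the deterministic case where the support is a single element). -/
/-! Write `Z = ∑ t, q t ^ γ`. Since `∑ q = 1`, the normalisation `q ^ γ / Z` returns `q` exactly
when `q ^ γ = k • q` for some `k ≠ 0`. On the support this says `q s ^ (γ - 1) = k`, and
`x ↦ x ^ (γ - 1)` is injective on `(0, ∞)` for `γ ≠ 1`, so all nonzero values of `q` agree.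
Conversely, if they all equal `c`, then `q ^ γ = c ^ (γ - 1) • q`, using `0 ^ γ = 0`. -/

open Finset

theorem forall_div_sum_eq_iff_exists_eq_mul {ι : Type*} [Fintype ι] (p q : ι → ℝ)
    (hq1 : ∑ s, q s = 1) :
    (∀ s, p s / ∑ t, p t = q s) ↔ ∃ k ≠ 0, ∀ s, p s = k * q s := by
  constructor
  · intro h
    have hZ : ∑ t, p t ≠ 0 := by
      intro hZ
      simp only [hZ, div_zero] at h
      simp [← h] at hq1
    exact ⟨∑ t, p t, hZ, fun s => by rw [← h s, mul_div_cancel₀ _ hZ]⟩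
  · rintro ⟨k, hk, h⟩ s
    have hZ : ∑ t, p t = k := by simp only [h, ← mul_sum, hq1, mul_one]
    rw [hZ, h s, mul_div_cancel_left₀ _ hk]

theorem Real.eq_of_rpow_eq_mul_self {γ k x y : ℝ} (hγ1 : γ ≠ 1) (hx : 0 < x) (hy : 0 < y)
    (hxk : x ^ γ = k * x) (hyk : y ^ γ = k * y) : x = y := by
  have hpow : ∀ z : ℝ, 0 < z → z ^ γ = k * z → z ^ (γ - 1) = k := fun z hz hzk => by
    rw [Real.rpow_sub_one hz.ne', hzk, mul_div_cancel_right₀ _ hz.ne']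
  exact Real.rpow_left_injOn (sub_ne_zero.mpr hγ1) hx.le hy.le
    ((hpow x hx hxk).trans (hpow y hy hyk).symm)

theorem exists_rpow_eq_mul_of_pos_eq {ι : Type*} (q : ι → ℝ) (hq0 : ∀ s, 0 ≤ q s) {γ : ℝ}
    (hγ : 0 < γ) (h : ∀ s t, 0 < q s → 0 < q t → q s = q t) :
    ∃ k ≠ 0, ∀ s, q s ^ γ = k * q s := by
  by_cases hsupp : ∃ s, 0 < q s
  · obtain ⟨s₀, hs₀⟩ := hsupp
    refine ⟨q s₀ ^ (γ - 1), (Real.rpow_pos_of_pos hs₀ _).ne', fun s => ?_⟩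
    rcases (hq0 s).eq_or_lt with hs | hs
    · rw [← hs, Real.zero_rpow hγ.ne', mul_zero]
    · rw [h s s₀ hs hs₀, Real.rpow_sub_one hs₀.ne', div_mul_cancel₀ _ hs₀.ne']
  · simp only [not_exists, not_lt] at hsupp
    refine ⟨1, one_ne_zero, fun s => ?_⟩
    rw [le_antisymm (hsupp s) (hq0 s), Real.zero_rpow hγ.ne', mul_zero]

theorem stmt17_general {S : Type*} [Fintype S]
    (q : S → ℝ) (hq0 : ∀ s, 0 ≤ q s) (hq1 : ∑ s, q s = 1)
    (γ : ℝ) (hγ : 0 < γ) (hγ1 : γ ≠ 1) :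
    (∀ s, q s ^ γ / (∑ t, q t ^ γ) = q s) ↔
    (∀ s t : S, 0 < q s → 0 < q t → q s = q t) := by
  rw [forall_div_sum_eq_iff_exists_eq_mul (fun s => q s ^ γ) q hq1]
  constructor
  · rintro ⟨k, -, hk⟩ s t hs ht
    exact Real.eq_of_rpow_eq_mul_self hγ1 hs ht (hk s) (hk t)
  · exact exists_rpow_eq_mul_of_pos_eq q hq0 hγ

theorem stmt17 {S : Type*} [Fintype S] [Nonempty S]
    (q : S → ℝ) (hq0 : ∀ s, 0 ≤ q s) (hq1 : ∑ s, q s = 1)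
    (γ : ℝ) (hγ : 0 < γ) (hγ1 : γ ≠ 1) :
    (∀ s, q s ^ γ / (∑ t, q t ^ γ) = q s) ↔
    (∀ s t : S, 0 < q s → 0 < q t → q s = q t) :=
  stmt17_general q hq0 hq1 γ hγ hγ1
end
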